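/- Let Ω ⊆ ℂ^d be open connected and X ⊆ H(Ω) a topological vector space whose topology is induced by a complete metric and in which convergence implies pointwise convergence on Ω. If Ω is a weak X-domain of holomorphy, then the set of f ∈ X that are non-extendable (in the sense of Riemann domains) is a dense G_δ subset of X. -/

import Mathlib

open Metric Set Filter

/-- `f` is extendable in the sense of Riemann domains from the domain `Ω`. -/
def ExtendableRiemann {d : ℕ} (Ω : Set (EuclideanSpace ℂ (Fin d)))
    (f : EuclideanSpace ℂ (Fin d) → ℂ) : Prop :=
  ∃ (c₁ c₂ : EuclideanSpace ℂ (Fin d)) (r₁ r₂ : ℝ), 0 < r₁ ∧ 0 < r₂ ∧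
    closedBall c₁ r₁ ⊆ ball c₂ r₂ ∩ Ω ∧
    (ball c₂ r₂ ∩ Ω).Nonempty ∧ (ball c₂ r₂ ∩ Ωᶜ).Nonempty ∧
    ∃ (F : EuclideanSpace ℂ (Fin d) → ℂ) (M : ℝ),
      DifferentiableOn ℂ F (ball c₂ r₂) ∧
      (∀ z ∈ ball c₂ r₂, ‖F z‖ ≤ M) ∧
      EqOn F f (ball c₁ r₁)

/-!
Let `T(B₁, B₂, M)` be the set of `f ∈ X` whose restriction to `B₁` has a holomorphic extension to
`B₂` bounded by `M`. Every extendable `f` lies in some `T(B₁, B₂, M)` with balls of rational radii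
centred in a countable dense set and `M ∈ ℕ`, so the non-extendable functions form a countable
intersection of complements. Each `T` is closed: extensions along a convergent sequence have a
pointwise cluster point (Tychonoff), and it is again holomorphic and bounded by `M`, because
Schwarz's lemma bounds Taylor remainders uniformly over bounded holomorphic functions. Each `T` has
empty interior: if `f ∈ T` and `g` admits no bounded extension, then `f + t • g ∉ T` for `t ≠ 0`.
Baire's theorem concludes.
-/

open Topology

section RationalBalls

variable {α : Type*} [PseudoMetricSpace α] {D Ω : Set α}

theorem Dense.exists_rat_closedBall_subset_ball (hD : Dense D) (x : α) {ε : ℝ} (hε : 0 < ε) :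
    ∃ c ∈ D, ∃ q : ℚ, 0 < (q : ℝ) ∧ closedBall c q ⊆ ball x ε := by
  obtain ⟨c, hcD, hcx⟩ :=
    hD.exists_mem_open isOpen_ball (nonempty_ball (x := x) |>.mpr (half_pos hε))
  obtain ⟨q, hq₀, hq⟩ := exists_rat_btwn (half_pos hε)
  refine ⟨c, hcD, q, hq₀, closedBall_subset_ball' ?_⟩
  linarith [mem_ball.mp hcx]

theorem Dense.exists_rat_ball_between (hD : Dense D) (x : α) {r r' : ℝ} (hr : r' < r) :
    ∃ c ∈ D, ∃ q : ℚ, closedBall x r' ⊆ ball c q ∧ ball c q ⊆ ball x r := by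
  obtain ⟨δ, hδ, hrδ⟩ : ∃ δ > 0, r = r' + 3 * δ := ⟨(r - r') / 3, by linarith, by ring⟩
  obtain ⟨c, hcD, hcx⟩ := hD.exists_mem_open isOpen_ball (nonempty_ball (x := x) |>.mpr hδ)
  obtain ⟨q, hq₁, hq₂⟩ := exists_rat_btwn (show r' + δ < r' + 2 * δ by linarith)
  have hc : dist c x < δ := mem_ball.mp hcx
  refine ⟨c, hcD, q, closedBall_subset_ball' ?_, ball_subset_ball' ?_⟩
  · linarith [dist_comm x c]
  · linarith

def IsBallPair (Ω : Set α) (c₁ c₂ : α) (r₁ r₂ : ℝ) : Prop :=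
  0 < r₁ ∧ 0 < r₂ ∧ closedBall c₁ r₁ ⊆ ball c₂ r₂ ∩ Ω ∧
    (ball c₂ r₂ ∩ Ω).Nonempty ∧ (ball c₂ r₂ ∩ Ωᶜ).Nonempty

theorem IsBallPair.exists_rat (hD : Dense D) {c₁ c₂ : α} {r₁ r₂ : ℝ}
    (h : IsBallPair Ω c₁ c₂ r₁ r₂) : ∃ c₁' ∈ D, ∃ c₂' ∈ D, ∃ q₁ q₂ : ℚ,
      IsBallPair Ω c₁' c₂' q₁ q₂ ∧ ball c₁' q₁ ⊆ ball c₁ r₁ ∧ ball c₂' q₂ ⊆ ball c₂ r₂ := by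
  obtain ⟨hr₁, -, hsub, -, w, hw, hwΩ⟩ := h
  have hc₁ : dist c₁ c₂ < r₂ := mem_ball.mp (hsub (mem_closedBall_self hr₁.le)).1
  set ε := min r₁ ((r₂ - dist c₁ c₂) / 2)
  have hε : 0 < ε := lt_min hr₁ (by linarith)
  set r' := max (dist c₁ c₂ + ε) (dist w c₂)
  have hr' : r' < r₂ := max_lt (by linarith [min_le_right r₁ ((r₂ - dist c₁ c₂) / 2)]) hw
  obtain ⟨c₂', hc₂'D, q₂, hin, hout⟩ := hD.exists_rat_ball_between c₂ hr'
  obtain ⟨c₁', hc₁'D, q₁, hq₁, hsub₁⟩ := hD.exists_rat_closedBall_subset_ball c₁ hε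
  have hε_r₁ : ball c₁ ε ⊆ ball c₁ r₁ := ball_subset_ball (min_le_left _ _)
  have hε_r' : ball c₁ ε ⊆ closedBall c₂ r' :=
    (ball_subset_ball' (by linarith [le_max_left (dist c₁ c₂ + ε) (dist w c₂)])).trans
      ball_subset_closedBall
  have hε_sub : ball c₁ ε ⊆ ball c₂' q₂ ∩ Ω := fun y hy =>
    ⟨hin (hε_r' hy), (hsub (ball_subset_closedBall (hε_r₁ hy))).2⟩
  have hw' : w ∈ ball c₂' q₂ := hin (mem_closedBall.mpr (le_max_right _ _))
  exact ⟨c₁', hc₁'D, c₂', hc₂'D, q₁, q₂,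
    ⟨hq₁, pos_of_mem_ball hw', hsub₁.trans hε_sub,
      ⟨c₁', hε_sub (hsub₁ (mem_closedBall_self hq₁.le))⟩, ⟨w, hw', hwΩ⟩⟩,
    ball_subset_closedBall.trans (hsub₁.trans hε_r₁), hout⟩

end RationalBalls

namespace Complex

variable {E F : Type*} [NormedAddCommGroup E] [NormedSpace ℂ E]
  [NormedAddCommGroup F] [NormedSpace ℂ F] {f : E → F} {c z : E} {R M : ℝ}

theorem norm_fderiv_le_of_norm_le (hd : DifferentiableOn ℂ f (ball c R))
    (hb : ∀ z ∈ ball c R, ‖f z‖ ≤ M) (hR : 0 < R) : ‖fderiv ℂ f c‖ ≤ 2 * M / R := by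
  refine norm_fderiv_le_div_of_mapsTo_ball hd (fun z hz => ?_) hR
  rw [mem_closedBall, dist_eq_norm]
  linarith [norm_sub_le (f z) (f c), hb z hz, hb c (mem_ball_self hR)]

/-- Schwarz's lemma applied to the first-order Taylor remainder, which vanishes to second order
at `c` and is bounded by `4 M` on the ball. -/
theorem norm_sub_sub_fderiv_le_of_norm_le (hd : DifferentiableOn ℂ f (ball c R))
    (hb : ∀ z ∈ ball c R, ‖f z‖ ≤ M) (hz : z ∈ ball c R) :
    ‖f z - f c - fderiv ℂ f c (z - c)‖ ≤ 4 * M * (dist z c / R) ^ 2 := by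
  have hR : 0 < R := pos_of_mem_ball hz
  set L := fderiv ℂ f c
  set g : E → F := fun w => f w - f c - L (w - c)
  have hL : ‖L‖ ≤ 2 * M / R := norm_fderiv_le_of_norm_le hd hb hR
  have hgd : DifferentiableOn ℂ g (ball c R) :=
    (hd.sub_const _).sub (L.differentiable.comp (differentiable_id.sub_const c)).differentiableOn
  have hg_maps : MapsTo g (ball c R) (closedBall (g c) (4 * M)) := fun w hw => by
    have hLw : ‖L (w - c)‖ ≤ 2 * M := calc
      ‖L (w - c)‖ ≤ ‖L‖ * ‖w - c‖ := L.le_opNorm _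
      _ ≤ 2 * M / R * R := by
        gcongr
        · exact (norm_nonneg _).trans hL
        · exact (mem_ball_iff_norm.mp hw).le
      _ = 2 * M := by field_simp
    simp only [g, sub_self, map_zero, mem_closedBall, dist_zero_right]
    linarith [norm_sub_le (f w - f c) (L (w - c)), norm_sub_le (f w) (f c), hb w hw,
      hb c (mem_ball_self hR)]
  have hg_o : (g · - g c) =o[𝓝 c] (fun w => ‖w - c‖ ^ 1) := by
    simpa [g] using (hd.differentiableAt (isOpen_ball.mem_nhds (mem_ball_self hR))).hasFDerivAt
      |>.isLittleO.norm_right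
  simpa [g, dist_eq_norm] using
    dist_le_mul_div_pow_of_mapsTo_ball_of_isLittleO hgd hg_maps hg_o hz

end Complex

theorem hasFDerivAt_of_norm_sub_sub_le_sq {𝕜 E F : Type*} [NontriviallyNormedField 𝕜]
    [NormedAddCommGroup E] [NormedSpace 𝕜 E] [NormedAddCommGroup F] [NormedSpace 𝕜 F]
    {f : E → F} {L : E →L[𝕜] F} {x : E} {C : ℝ}
    (h : ∀ᶠ y in 𝓝 x, ‖f y - f x - L (y - x)‖ ≤ C * ‖y - x‖ ^ 2) : HasFDerivAt f L x := by
  have hsq : (fun y => ‖y - x‖ ^ 2) =o[𝓝 x] (fun y => y - x) :=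
    (Asymptotics.isLittleO_norm_pow_id one_lt_two).comp_tendsto
      (tendsto_sub_nhds_zero_iff.mpr tendsto_id)
  exact hasFDerivAt_iff_isLittleO.mpr
    ((Asymptotics.IsBigO.of_bound C (by simpa using h)).trans_isLittleO hsq)

section BoundedHolomorphic

variable {E F : Type*} [NormedAddCommGroup E] [NormedSpace ℂ E]
  [NormedAddCommGroup F] [NormedSpace ℂ F]

def boundedHolomorphicOn (U : Set E) (M : ℝ) : Set (E → F) :=
  {f | DifferentiableOn ℂ f U ∧ ∀ z ∈ U, ‖f z‖ ≤ M}

theorem isClosed_boundedHolomorphicOn [FiniteDimensional ℂ E] [FiniteDimensional ℂ F]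
    {U : Set E} (hU : IsOpen U) (M : ℝ) : IsClosed (boundedHolomorphicOn U M : Set (E → F)) := by
  refine isClosed_iff_ultrafilter.mpr fun g u hug hu => ?_
  have hlim : ∀ z, Tendsto (fun f : E → F => f z) u (𝓝 (g z)) := fun z =>
    ((continuous_apply z).tendsto g).comp hug
  have hgb : ∀ z ∈ U, ‖g z‖ ≤ M := fun z hz =>
    le_of_tendsto (hlim z).norm (mem_of_superset hu fun f hf => hf.2 z hz)
  refine ⟨fun z₀ hz₀ => ?_, hgb⟩
  obtain ⟨R, hR, hball⟩ := isOpen_iff.mp hU z₀ hz₀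
  obtain ⟨L, -, hL⟩ := (isCompact_closedBall (0 : E →L[ℂ] F) (2 * M / R)).ultrafilter_le_nhds
    (u.map fun f => fderiv ℂ f z₀) (by
      refine le_principal_iff.mpr (mem_map.mpr (mem_of_superset hu fun f hf => ?_))
      simpa using Complex.norm_fderiv_le_of_norm_le (hf.1.mono hball)
        (fun z hz => hf.2 z (hball hz)) hR)
  refine (hasFDerivAt_of_norm_sub_sub_le_sq (L := L) (C := 4 * M / R ^ 2) ?_)
    |>.differentiableAt.differentiableWithinAt
  filter_upwards [ball_mem_nhds z₀ hR] with z hz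
  have hLz : Tendsto (fun f : E → F => fderiv ℂ f z₀ (z - z₀)) u (𝓝 (L (z - z₀))) :=
    ((ContinuousLinearMap.apply ℂ F (z - z₀)).continuous.tendsto L).comp hL
  refine le_of_tendsto (((hlim z).sub (hlim z₀)).sub hLz).norm
    (mem_of_superset hu fun f hf => ?_)
  have := Complex.norm_sub_sub_fderiv_le_of_norm_le (hf.1.mono hball)
    (fun z hz => hf.2 z (hball hz)) hz
  rw [dist_eq_norm] at this
  exact this.trans_eq (by ring)

/-- Montel-type compactness: extending by `0` off `U` places the family in the compact product
`∏ z, closedBall 0 M`. -/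
theorem exists_mapClusterPt_boundedHolomorphicOn [FiniteDimensional ℂ E] [FiniteDimensional ℂ F]
    {ι : Type*} {l : Filter ι} [l.NeBot] {U : Set E} (hU : IsOpen U) {M : ℝ}
    {f : ι → E → F} (hf : ∀ i, f i ∈ boundedHolomorphicOn U M) :
    ∃ g ∈ boundedHolomorphicOn U M, ∀ z ∈ U, MapClusterPt (g z) l (f · z) := by
  classical
  set K : Set (E → F) := boundedHolomorphicOn U M ∩ {g | ∀ z ∉ U, g z = 0}
  have hK : IsCompact K := by
    refine (isCompact_univ_pi fun _ => isCompact_closedBall (0 : F) (max M 0)).of_isClosed_subset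
      ((isClosed_boundedHolomorphicOn hU M).inter ?_) fun g hg z _ => ?_
    · simp only [ofPred_forall]
      exact isClosed_biInter fun z _ => isClosed_eq (continuous_apply z) continuous_const
    · rw [mem_closedBall_zero_iff]
      by_cases hz : z ∈ U
      · exact (hg.1.2 z hz).trans (le_max_left _ _)
      · simp [hg.2 z hz]
  have hfK : ∀ i, U.piecewise (f i) 0 ∈ K := fun i =>
    ⟨⟨(hf i).1.congr fun z hz => U.piecewise_eq_of_mem _ _ hz,
      fun z hz => by simpa [U.piecewise_eq_of_mem _ _ hz] using (hf i).2 z hz⟩,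
      fun z hz => U.piecewise_eq_of_notMem _ _ hz⟩
  obtain ⟨g, hgK, hg⟩ := hK.exists_mapClusterPt (f := l) (u := fun i => U.piecewise (f i) 0)
    (le_principal_iff.mpr (mem_map.mpr (univ_mem' hfK)))
  refine ⟨g, hgK.1, fun z hz => ?_⟩
  have := hg.continuousAt_comp (continuous_apply z).continuousAt
  simpa only [Function.comp_def, U.piecewise_eq_of_mem _ _ hz] using this

section Algebra

variable {U : Set E} {M N : ℝ} {f g : E → F}

theorem sub_mem_boundedHolomorphicOn (hf : f ∈ boundedHolomorphicOn U M)
    (hg : g ∈ boundedHolomorphicOn U N) : f - g ∈ boundedHolomorphicOn U (M + N) :=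
  ⟨hf.1.sub hg.1, fun z hz => (norm_sub_le _ _).trans (add_le_add (hf.2 z hz) (hg.2 z hz))⟩

theorem const_smul_mem_boundedHolomorphicOn (c : ℂ) (hf : f ∈ boundedHolomorphicOn U M) :
    c • f ∈ boundedHolomorphicOn U (‖c‖ * M) :=
  ⟨hf.1.const_smul c, fun z hz => by
    rw [Pi.smul_apply, norm_smul]
    exact mul_le_mul_of_nonneg_left (hf.2 z hz) (norm_nonneg c)⟩

end Algebra

def HasBoundedExtension (B₁ B₂ : Set E) (M : ℝ) (f : E → F) : Prop :=
  ∃ G ∈ boundedHolomorphicOn B₂ M, EqOn G f B₁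

namespace HasBoundedExtension

variable {B₁ B₂ B₁' B₂' : Set E} {M N : ℝ} {f g : E → F}

theorem mono (h₁ : B₁' ⊆ B₁) (h₂ : B₂' ⊆ B₂) (hM : M ≤ N)
    (hf : HasBoundedExtension B₁ B₂ M f) : HasBoundedExtension B₁' B₂' N f := by
  obtain ⟨G, ⟨hGd, hGb⟩, hGf⟩ := hf
  exact ⟨G, ⟨hGd.mono h₂, fun z hz => (hGb z (h₂ hz)).trans hM⟩, hGf.mono h₁⟩

theorem sub (hf : HasBoundedExtension B₁ B₂ M f) (hg : HasBoundedExtension B₁ B₂ N g) :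
    HasBoundedExtension B₁ B₂ (M + N) (f - g) := by
  obtain ⟨F₁, hF₁, hF₁f⟩ := hf
  obtain ⟨F₂, hF₂, hF₂g⟩ := hg
  exact ⟨F₁ - F₂, sub_mem_boundedHolomorphicOn hF₁ hF₂,
    fun z hz => congr_arg₂ (· - ·) (hF₁f hz) (hF₂g hz)⟩

theorem const_smul (c : ℂ) (hf : HasBoundedExtension B₁ B₂ M f) :
    HasBoundedExtension B₁ B₂ (‖c‖ * M) (c • f) := by
  obtain ⟨G, hG, hGf⟩ := hf
  exact ⟨c • G, const_smul_mem_boundedHolomorphicOn c hG, fun z hz => congr_arg (c • ·) (hGf hz)⟩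

end HasBoundedExtension

section FunctionSpace

variable {X : Type*} [TopologicalSpace X] {B₁ B₂ : Set E} {M : ℝ}

theorem isClosed_setOf_hasBoundedExtension [FiniteDimensional ℂ E] [FiniteDimensional ℂ F]
    [SequentialSpace X] {φ : X → E → F} (hB₂ : IsOpen B₂) (hB : B₁ ⊆ B₂)
    (hφ : ∀ (x : ℕ → X) (y : X), Tendsto x atTop (𝓝 y) →
      ∀ z ∈ B₁, Tendsto (fun n => φ (x n) z) atTop (𝓝 (φ y z))) :
    IsClosed {x | HasBoundedExtension B₁ B₂ M (φ x)} := by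
  refine IsSeqClosed.isClosed fun x y hx hxy => ?_
  choose G hG hGx using hx
  obtain ⟨H, hH, hHG⟩ := exists_mapClusterPt_boundedHolomorphicOn (l := atTop) hB₂ hG
  have hGz : ∀ z ∈ B₁, Tendsto (fun n => G n z) atTop (𝓝 (φ y z)) := fun z hz => by
    simpa only [hGx _ hz] using hφ x y hxy z hz
  exact ⟨H, hH, fun z hz => eq_of_nhds_neBot (ClusterPt.mono (hHG z (hB hz)) (hGz z hz))⟩

theorem dense_setOf_not_hasBoundedExtension [AddCommGroup X] [Module ℂ X] [ContinuousAdd X]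
    [ContinuousSMul ℂ X] (φ : X →ₗ[ℂ] E → F) {g : X}
    (hg : ∀ N, ¬ HasBoundedExtension B₁ B₂ N (φ g)) :
    Dense {x | ¬ HasBoundedExtension B₁ B₂ M (φ x)} := by
  refine fun x => ?_
  by_cases hx : HasBoundedExtension B₁ B₂ M (φ x)
  · have hlim : Tendsto (fun t : ℂ => x + t • g) (𝓝[≠] 0) (𝓝 x) := by
      have hc : Continuous fun t : ℂ => x + t • g := by fun_prop
      simpa using (hc.tendsto 0).mono_left nhdsWithin_le_nhds
    refine mem_closure_of_tendsto hlim (eventually_mem_nhdsWithin.mono fun t (ht : t ≠ 0) hxt => ?_)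
    have hg_eq : t⁻¹ • (φ (x + t • g) - φ x) = φ g := by
      rw [map_add, map_smul, add_sub_cancel_left, inv_smul_smul₀ ht]
    exact hg _ (hg_eq ▸ (hxt.sub hx).const_smul t⁻¹)
  · exact subset_closure hx

end FunctionSpace

end BoundedHolomorphic

theorem extendableRiemann_iff_exists_rat {d : ℕ} {Ω D : Set (EuclideanSpace ℂ (Fin d))}
    {f : EuclideanSpace ℂ (Fin d) → ℂ} (hD : Dense D) :
    ExtendableRiemann Ω f ↔ ∃ c₁ ∈ D, ∃ c₂ ∈ D, ∃ q₁ q₂ : ℚ, ∃ m : ℕ,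
      IsBallPair Ω c₁ c₂ q₁ q₂ ∧ HasBoundedExtension (ball c₁ q₁) (ball c₂ q₂) m f := by
  constructor
  · rintro ⟨c₁, c₂, r₁, r₂, hr₁, hr₂, hsub, hΩ, hΩc, F, M, hFd, hFb, hFf⟩
    obtain ⟨c₁', hc₁', c₂', hc₂', q₁, q₂, hP, h₁, h₂⟩ :=
      IsBallPair.exists_rat hD ⟨hr₁, hr₂, hsub, hΩ, hΩc⟩
    exact ⟨c₁', hc₁', c₂', hc₂', q₁, q₂, ⌈M⌉₊, hP,
      HasBoundedExtension.mono h₁ h₂ (Nat.le_ceil M) ⟨F, ⟨hFd, hFb⟩, hFf⟩⟩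
  · rintro ⟨c₁, -, c₂, -, q₁, q₂, m, ⟨hq₁, hq₂, hsub, hΩ, hΩc⟩, F, ⟨hFd, hFb⟩, hFf⟩
    exact ⟨c₁, c₂, q₁, q₂, hq₁, hq₂, hsub, hΩ, hΩc, F, m, hFd, hFb, hFf⟩

theorem stmt8_general {d : ℕ} (Ω : Set (EuclideanSpace ℂ (Fin d)))
    (X : Type*) [AddCommGroup X] [Module ℂ X] [MetricSpace X] [CompleteSpace X]
    [IsTopologicalAddGroup X] [ContinuousSMul ℂ X]
    (ι : X →ₗ[ℂ] (EuclideanSpace ℂ (Fin d) → ℂ))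
    (hptw : ∀ (g : ℕ → X) (f : X), Tendsto g atTop (nhds f) →
      ∀ z ∈ Ω, Tendsto (fun n => ι (g n) z) atTop (nhds (ι f z)))
    (hweak : ∀ (c₁ c₂ : EuclideanSpace ℂ (Fin d)) (r₁ r₂ : ℝ), 0 < r₁ → 0 < r₂ →
      closedBall c₁ r₁ ⊆ ball c₂ r₂ ∩ Ω →
      (ball c₂ r₂ ∩ Ω).Nonempty → (ball c₂ r₂ ∩ Ωᶜ).Nonempty →
      ∃ f : X, ¬ ∃ (F : EuclideanSpace ℂ (Fin d) → ℂ) (M : ℝ),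
        DifferentiableOn ℂ F (ball c₂ r₂) ∧
        (∀ z ∈ ball c₂ r₂, ‖F z‖ ≤ M) ∧
        EqOn F (ι f) (ball c₁ r₁)) :
    Dense {f : X | ¬ ExtendableRiemann Ω (ι f)} ∧
    IsGδ {f : X | ¬ ExtendableRiemann Ω (ι f)} := by
  obtain ⟨D, hDc, hD⟩ := TopologicalSpace.exists_countable_dense (EuclideanSpace ℂ (Fin d))
  have := hDc.to_subtype
  let U (p : D × D × ℚ × ℚ × ℕ) : Set X :=
    {x | IsBallPair Ω (p.1 : EuclideanSpace ℂ (Fin d)) p.2.1 p.2.2.1 p.2.2.2.1 →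
      ¬ HasBoundedExtension (ball (p.1 : EuclideanSpace ℂ (Fin d)) p.2.2.1) (ball p.2.1 p.2.2.2.1)
        p.2.2.2.2 (ι x)}
  have hU : {f : X | ¬ ExtendableRiemann Ω (ι f)} = ⋂ p, U p := by
    ext x
    simp only [U, mem_ofPred_eq, mem_iInter, extendableRiemann_iff_exists_rat hD, not_exists,
      not_and, Prod.forall, Subtype.forall]
  have hU_open_dense : ∀ p, IsOpen (U p) ∧ Dense (U p) := by
    rintro ⟨⟨c₁, -⟩, ⟨c₂, -⟩, q₁, q₂, m⟩
    by_cases hP : IsBallPair Ω c₁ c₂ q₁ q₂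
    · simp only [U, hP, true_implies]
      obtain ⟨hq₁, hq₂, hsub, hΩ, hΩc⟩ := hP
      obtain ⟨g, hg⟩ := hweak c₁ c₂ q₁ q₂ hq₁ hq₂ hsub hΩ hΩc
      have hB₁ : ball c₁ q₁ ⊆ ball c₂ q₂ ∩ Ω := ball_subset_closedBall.trans hsub
      exact ⟨(isClosed_setOf_hasBoundedExtension isOpen_ball (hB₁.trans inter_subset_left)
          fun x y hxy z hz => hptw x y hxy z (hB₁ hz).2).isOpen_compl,
        dense_setOf_not_hasBoundedExtension ι fun N ⟨F, ⟨hFd, hFb⟩, hFg⟩ =>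
          hg ⟨F, N, hFd, hFb, hFg⟩⟩
    · simp [U, hP]
  rw [hU]
  exact ⟨dense_iInter_of_isOpen (fun p => (hU_open_dense p).1) (fun p => (hU_open_dense p).2),
    IsGδ.iInter_of_isOpen fun p => (hU_open_dense p).1⟩

theorem stmt8 {d : ℕ} (Ω : Set (EuclideanSpace ℂ (Fin d)))
    (hΩo : IsOpen Ω) (hΩc : IsConnected Ω)
    (X : Type*) [AddCommGroup X] [Module ℂ X] [MetricSpace X] [CompleteSpace X]
    [IsTopologicalAddGroup X] [ContinuousSMul ℂ X]
    (ι : X →ₗ[ℂ] (EuclideanSpace ℂ (Fin d) → ℂ)) (hinj : Function.Injective ι)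
    (hholo : ∀ f : X, DifferentiableOn ℂ (ι f) Ω)
    (hptw : ∀ (g : ℕ → X) (f : X), Tendsto g atTop (nhds f) →
      ∀ z ∈ Ω, Tendsto (fun n => ι (g n) z) atTop (nhds (ι f z)))
    (hweak : ∀ (c₁ c₂ : EuclideanSpace ℂ (Fin d)) (r₁ r₂ : ℝ), 0 < r₁ → 0 < r₂ →
      closedBall c₁ r₁ ⊆ ball c₂ r₂ ∩ Ω →
      (ball c₂ r₂ ∩ Ω).Nonempty → (ball c₂ r₂ ∩ Ωᶜ).Nonempty →
      ∃ f : X, ¬ ∃ (F : EuclideanSpace ℂ (Fin d) → ℂ) (M : ℝ),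
        DifferentiableOn ℂ F (ball c₂ r₂) ∧
        (∀ z ∈ ball c₂ r₂, ‖F z‖ ≤ M) ∧
        EqOn F (ι f) (ball c₁ r₁)) :
    Dense {f : X | ¬ ExtendableRiemann Ω (ι f)} ∧
    IsGδ {f : X | ¬ ExtendableRiemann Ω (ι f)} :=
  stmt8_general Ω X ι hptw hweak
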